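/- arXiv:1102.3362 — 2 statements merged into one kernel-verified Lean document; each statement's English description precedes it below -/
import Mathlib

section
/- Let (f_n) be a sequence of holomorphic functions on an open connected domain G ⊆ ℂ such that Σ_n |f_n(s)| converges for almost every s ∈ G (with respect to planar Lebesgue measure) and the function Φ(s) = Σ_n |f_n(s)| is locally integrable on G. Then Σ_n f_n converges uniformly on every compact subset of G, and in particular the sum is holomorphic on G. -/
/-!
The key estimate is the sub-mean-value property of `‖g‖` for holomorphic `g`: averaging the
mean value property over circles of radius `ρ ≤ r` (in polar coordinates) gives
`π r² ‖g z‖ ≤ ∫_{closedBall z r} ‖g‖`. For a compact `K ⊆ G` and a closed `r`-thickening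
`K' ⊆ G`, this bounds `sup_K ‖f n‖` by `(π r²)⁻¹ ∫_{K'} ‖f n‖`, and these bounds are summable
because `∑ₙ ∫_{K'} ‖f n‖ ≤ ∫_{K'} Φ < ∞`. The Weierstrass M-test gives uniform convergence on `K`,
and locally uniform limits of holomorphic functions are holomorphic.
-/

open MeasureTheory Filter Metric Set Real

section CircleAverage

variable {E : Type*} [NormedAddCommGroup E] [NormedSpace ℝ E]

theorem setIntegral_Ioo_circleMap_eq_smul_circleAverage (f : ℂ → E) (c : ℂ) (R : ℝ) :
    ∫ θ in Ioo (-π) π, f (circleMap c R θ) = (2 * π) • circleAverage f c R := by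
  have hper : Function.Periodic (fun θ => f (circleMap c R θ)) (2 * π) := fun θ => by
    simp only [periodic_circleMap c R θ]
  rw [circleAverage_def, smul_inv_smul₀ (by positivity), ← integral_Ioc_eq_integral_Ioo,
    ← intervalIntegral.integral_of_le (by linarith [pi_pos]),
    ← zero_add (2 * π), ← hper.intervalIntegral_add_eq (-π) 0]
  ring_nf

theorem setIntegral_closedBall_eq_intervalIntegral_circleAverage {f : ℂ → E} {c : ℂ} {r : ℝ}
    (hf : ContinuousOn f (closedBall c r)) (hr : 0 ≤ r) :
    ∫ w in closedBall c r, f w = ∫ ρ in 0..r, (2 * π * ρ) • circleAverage f c ρ := by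
  set S : Set (ℝ × ℝ) := Ioc 0 r ×ˢ Ioo (-π) π
  have hpolar : ∀ p : ℝ × ℝ, c + Complex.polarCoord.symm p = circleMap c p.1 p.2 := fun p => by
    simp [circleMap, Complex.exp_mul_I]
  calc ∫ w in closedBall c r, f w
      = ∫ w, (closedBall 0 r).indicator (fun w => f (c + w)) w := by
        rw [integral_indicator measurableSet_closedBall, ← sub_self c,
          ← preimage_add_closedBall c c r,
          (measurePreserving_add_left volume c).setIntegral_preimage_emb
            (measurableEmbedding_addLeft c)]
    _ = ∫ p in polarCoord.target,
          p.1 • (closedBall 0 r).indicator (fun w => f (c + w)) (Complex.polarCoord.symm p) :=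
        (Complex.integral_comp_polarCoord_symm _).symm
    _ = ∫ p in S, p.1 • f (circleMap c p.1 p.2) := by
        have hmem : ∀ p : ℝ × ℝ, 0 < p.1 →
            (Complex.polarCoord.symm p ∈ closedBall 0 r ↔ p.1 ≤ r) := fun p hp => by
          rw [mem_closedBall, dist_zero_right, Complex.norm_polarCoord_symm, abs_of_pos hp]
        rw [setIntegral_eq_of_subset_of_forall_sdiff_eq_zero polarCoord.open_target.measurableSet
          (prod_mono Ioc_subset_Ioi_self subset_rfl)]
        · refine setIntegral_congr_fun (measurableSet_Ioc.prod measurableSet_Ioo) fun p hp => ?_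
          rw [indicator_of_mem ((hmem p hp.1.1).2 hp.1.2), hpolar]
        · rintro p ⟨⟨hp0, hpθ⟩, hpS⟩
          have hpr : ¬ p.1 ≤ r := fun h => hpS ⟨⟨hp0, h⟩, hpθ⟩
          rw [indicator_of_notMem (mt (hmem p hp0).1 hpr), smul_zero]
    _ = ∫ ρ in Ioc 0 r, ∫ θ in Ioo (-π) π, ρ • f (circleMap c ρ θ) := by
        have hcont : ContinuousOn (fun p : ℝ × ℝ => p.1 • f (circleMap c p.1 p.2))
            (Icc 0 r ×ˢ Icc (-π) π) := by
          refine continuous_fst.continuousOn.smul (hf.comp (by fun_prop) fun p hp => ?_)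
          exact closedBall_subset_closedBall hp.1.2 (circleMap_mem_closedBall c hp.1.1 p.2)
        rw [Measure.volume_eq_prod, setIntegral_prod]
        exact (hcont.integrableOn_compact (isCompact_Icc.prod isCompact_Icc)).mono_set
          (prod_mono Ioc_subset_Icc_self Ioo_subset_Icc_self)
    _ = ∫ ρ in 0..r, (2 * π * ρ) • circleAverage f c ρ := by
        rw [intervalIntegral.integral_of_le hr]
        refine setIntegral_congr_fun measurableSet_Ioc fun ρ _ => ?_
        rw [integral_smul, setIntegral_Ioo_circleMap_eq_smul_circleAverage, smul_smul, mul_comm ρ]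

end CircleAverage

theorem summable_integral_norm_of_integrable_tsum_norm {α ι E : Type*} [MeasurableSpace α]
    {μ : Measure α} [NormedAddCommGroup E] {f : ι → α → E} (hf : ∀ i, Integrable (f i) μ)
    (hsum : ∀ᵐ x ∂μ, Summable fun i => ‖f i x‖)
    (hint : Integrable (fun x => ∑' i, ‖f i x‖) μ) :
    Summable fun i => ∫ x, ‖f i x‖ ∂μ := by
  refine summable_of_sum_le (c := ∫ x, ∑' i, ‖f i x‖ ∂μ)
    (fun i => integral_nonneg fun _ => norm_nonneg _) fun u => ?_
  rw [← integral_finsetSum u fun i _ => (hf i).norm]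
  refine integral_mono_ae (integrable_finsetSum u fun i _ => (hf i).norm) hint ?_
  filter_upwards [hsum] with x hx
  exact hx.sum_le_tsum u fun _ _ => norm_nonneg _

section Holomorphic

variable {F : Type*} [NormedAddCommGroup F] [NormedSpace ℂ F] [CompleteSpace F]

theorem DiffContOnCl.norm_le_circleAverage_norm {g : ℂ → F} {c : ℂ} {R : ℝ}
    (hg : DiffContOnCl ℂ g (ball c |R|)) : ‖g c‖ ≤ Real.circleAverage (‖g ·‖) c R := by
  rw [← hg.circleAverage, circleAverage_def, circleAverage_def, norm_smul, smul_eq_mul,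
    norm_inv, Real.norm_of_nonneg (by positivity)]
  gcongr
  exact intervalIntegral.norm_integral_le_integral_norm (by positivity)

theorem DiffContOnCl.mul_norm_le_setIntegral_norm {g : ℂ → F} {c : ℂ} {r : ℝ}
    (hg : DiffContOnCl ℂ g (ball c r)) (hr : 0 < r) :
    π * r ^ 2 * ‖g c‖ ≤ ∫ w in closedBall c r, ‖g w‖ := by
  have hcont : ContinuousOn (‖g ·‖) (closedBall c r) := by
    rw [← closure_ball c hr.ne']
    exact hg.continuousOn.norm
  have havg : ContinuousOn (Real.circleAverage (‖g ·‖) c) (Icc 0 r) :=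
    (hcont.mono fun z hz => by simpa [dist_eq_norm] using hz.2).circleAverage fun _ h => h.1
  rw [setIntegral_closedBall_eq_intervalIntegral_circleAverage hcont hr.le]
  calc π * r ^ 2 * ‖g c‖ = ∫ ρ in 0..r, (2 * π * ρ) * ‖g c‖ := by
        rw [intervalIntegral.integral_mul_const, intervalIntegral.integral_const_mul, integral_id]
        ring
    _ ≤ ∫ ρ in 0..r, (2 * π * ρ) • Real.circleAverage (‖g ·‖) c ρ := by
        refine intervalIntegral.integral_mono_on hr.le
          (((continuous_const.mul continuous_id).mul continuous_const).intervalIntegrable _ _)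
          ((continuousOn_const.mul continuousOn_id).smul ?_).intervalIntegrable fun ρ hρ => ?_
        · rwa [uIcc_of_le hr.le]
        · have hgρ : DiffContOnCl ℂ g (ball c |ρ|) := by
            refine hg.mono (ball_subset_ball ?_)
            rw [abs_of_nonneg hρ.1]
            exact hρ.2
          exact mul_le_mul_of_nonneg_left hgρ.norm_le_circleAverage_norm
            (by have := hρ.1; positivity)

theorem IsCompact.norm_le_setIntegral_cthickening_norm {g : ℂ → F} {K : Set ℂ} (hK : IsCompact K)
    {r : ℝ} (hr : 0 < r) (hg : DifferentiableOn ℂ g (cthickening r K)) {z : ℂ} (hz : z ∈ K) :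
    ‖g z‖ ≤ (π * r ^ 2)⁻¹ * ∫ w in cthickening r K, ‖g w‖ := by
  have hball : closedBall z r ⊆ cthickening r K := closedBall_subset_cthickening hz r
  rw [le_inv_mul_iff₀ (by positivity)]
  calc π * r ^ 2 * ‖g z‖ ≤ ∫ w in closedBall z r, ‖g w‖ :=
        (hg.diffContOnCl_ball hball).mul_norm_le_setIntegral_norm hr
    _ ≤ ∫ w in cthickening r K, ‖g w‖ :=
        setIntegral_mono_set (hg.continuousOn.norm.integrableOn_compact hK.cthickening)
          (.of_forall fun _ => norm_nonneg _) hball.eventuallyLE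

theorem tendstoUniformlyOn_tsum_of_locallyIntegrableOn_tsum_norm {G K : Set ℂ} (hG : IsOpen G)
    {f : ℕ → ℂ → F} (hf : ∀ n, DifferentiableOn ℂ (f n) G)
    (hae : ∀ᵐ s ∂(volume.restrict G), Summable fun n => ‖f n s‖)
    (hloc : LocallyIntegrableOn (fun s => ∑' n, ‖f n s‖) G) (hKG : K ⊆ G) (hK : IsCompact K) :
    TendstoUniformlyOn (fun m s => ∑ n ∈ Finset.range m, f n s) (fun s => ∑' n, f n s) atTop K := by
  obtain ⟨r, hr, hKr⟩ := hK.exists_cthickening_subset_open hG hKG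
  have hK' : IsCompact (cthickening r K) := hK.cthickening
  have hsummable : Summable fun n => ∫ w in cthickening r K, ‖f n w‖ :=
    summable_integral_norm_of_integrable_tsum_norm
      (fun n => ((hf n).continuousOn.mono hKr).integrableOn_compact hK')
      (ae_restrict_of_ae_restrict_of_subset hKr hae)
      ((hloc.mono_set hKr).integrableOn_isCompact hK')
  exact tendstoUniformlyOn_tsum_nat (hsummable.mul_left _)
    fun n z hz => hK.norm_le_setIntegral_cthickening_norm hr ((hf n).mono hKr) hz

end Holomorphic

theorem series_of_holomorphic_general (G : Set ℂ) (hG : IsOpen G)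
    (f : ℕ → ℂ → ℂ) (hf : ∀ n, DifferentiableOn ℂ (f n) G)
    (hae : ∀ᵐ s ∂(volume.restrict G), Summable fun n => ‖f n s‖)
    (hloc : LocallyIntegrableOn (fun s => ∑' n, ‖f n s‖) G) :
    (∀ K ⊆ G, IsCompact K →
        TendstoUniformlyOn (fun m s => ∑ n ∈ Finset.range m, f n s)
          (fun s => ∑' n, f n s) atTop K) ∧
      DifferentiableOn ℂ (fun s => ∑' n, f n s) G := by
  have hunif : ∀ K ⊆ G, IsCompact K →
      TendstoUniformlyOn (fun m s => ∑ n ∈ Finset.range m, f n s)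
        (fun s => ∑' n, f n s) atTop K := fun _ hKG hK =>
    tendstoUniformlyOn_tsum_of_locallyIntegrableOn_tsum_norm hG hf hae hloc hKG hK
  have hpartial : ∀ m, DifferentiableOn ℂ (fun s => ∑ n ∈ Finset.range m, f n s) G :=
    fun _ => DifferentiableOn.fun_sum fun n _ => hf n
  exact ⟨hunif, ((tendstoLocallyUniformlyOn_iff_forall_isCompact hG).2 hunif).differentiableOn
    (.of_forall hpartial) hG⟩

/-- Lemma 3: if f_n are holomorphic on an open connected G ⊆ ℂ, Σ‖f_n(s)‖ converges
a.e. on G, and Φ(s) = Σ‖f_n(s)‖ is locally integrable on G, then Σ f_n converges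
uniformly on compact subsets of G and its sum is holomorphic on G. -/
theorem series_of_holomorphic (G : Set ℂ) (hG : IsOpen G) (hGc : IsConnected G)
    (f : ℕ → ℂ → ℂ) (hf : ∀ n, DifferentiableOn ℂ (f n) G)
    (hae : ∀ᵐ s ∂(volume.restrict G), Summable fun n => ‖f n s‖)
    (hloc : LocallyIntegrableOn (fun s => ∑' n, ‖f n s‖) G) :
    (∀ K ⊆ G, IsCompact K →
        TendstoUniformlyOn (fun m s => ∑ n ∈ Finset.range m, f n s)
          (fun s => ∑' n, f n s) atTop K) ∧
      DifferentiableOn ℂ (fun s => ∑' n, f n s) G :=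
  series_of_holomorphic_general G hG f hf hae hloc
end

section
/- Let (a_n), (b_n) be complex sequences and d_n = Σ_{d|n, d≤X} b_d a_{n/d} for a real parameter X ≥ 1. Suppose Σ|a_n|² n^{-2(σ-ε)} = C < ∞ and Σ_{n>X} |b_n|² n^{-2σ+2ε} =: R(X) < ∞ for some ε > 0 with σ - ε fixed, and suppose Σ_{d|n} b_d a_{n/d} = 0 for all n > 1. Then Σ_{n>X} |d_n|² n^{-2σ} ≤ c(ε) · C · R(X) for a constant c(ε) depending only on ε; in particular Σ_{n>X} |d_n|² n^{-2σ} → 0 as X → ∞. -/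
/-!
For `n > X ≥ 1` the vanishing of the full convolution `∑_{d ∣ n} b_d a_{n/d}` lets one replace
the divisors `d ≤ X` in `dₙ` by the divisors `d > X`, so that only the tail of `b` enters.
Cauchy–Schwarz then gives `|dₙ|² ≤ τ(n) ∑_{d ∣ n, d > X} |b_d|² |a_{n/d}|²`, and the divisor
bound `τ(n) ≪_ε n^{2ε}` turns `|dₙ|² n^{-2σ}` into at most `c(ε)` times the Dirichlet convolution
of the sequences `|b_k|² k^{-2σ+2ε} [k > X]` and `|a_m|² m^{-2σ+2ε}`, whose sum is the product
`C · R(X)`. Since `R(X) → 0`, so does the left-hand side.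
-/

open Finset Filter Topology
open scoped LSeries.notation

lemma add_one_le_mul_pow {r : ℝ} (hr : 1 < r) (v : ℕ) :
    (v + 1 : ℝ) ≤ (1 + (r - 1)⁻¹) * r ^ v := by
  have hr' : 0 < r - 1 := sub_pos.2 hr
  have bernoulli : 1 + v * (r - 1) ≤ r ^ v := by
    simpa using one_add_mul_le_pow (a := r - 1) (by linarith) v
  calc (v + 1 : ℝ) ≤ (1 + (r - 1)⁻¹) * (1 + v * (r - 1)) := by
        have hinv : (r - 1)⁻¹ * (r - 1) = 1 := inv_mul_cancel₀ hr'.ne'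
        nlinarith [inv_pos.2 hr', mul_nonneg (inv_pos.2 hr').le (Nat.cast_nonneg (α := ℝ) v)]
    _ ≤ (1 + (r - 1)⁻¹) * r ^ v := by gcongr

/-- Only the finitely many primes with `p ^ θ < 2` cost a constant in the divisor bound. -/
lemma add_one_le_ite_mul_rpow_pow {θ p : ℝ} (hθ : 0 < θ) (hp : 2 ≤ p) (v : ℕ) :
    (v + 1 : ℝ) ≤ (if p ^ θ < 2 then 1 + ((2 : ℝ) ^ θ - 1)⁻¹ else 1) * (p ^ θ) ^ v := by
  split_ifs with hsmall
  · have h2 : 1 < (2 : ℝ) ^ θ := Real.one_lt_rpow (by norm_num) hθ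
    calc (v + 1 : ℝ) ≤ (1 + ((2 : ℝ) ^ θ - 1)⁻¹) * ((2 : ℝ) ^ θ) ^ v := add_one_le_mul_pow h2 v
      _ ≤ _ := by gcongr
  · have hv : (v + 1 : ℝ) ≤ 2 ^ v := by exact_mod_cast Nat.lt_two_pow_self
    rw [one_mul]
    exact hv.trans (pow_le_pow_left₀ (by norm_num) (not_lt.1 hsmall) v)

theorem exists_card_divisors_le_mul_rpow {θ : ℝ} (hθ : 0 < θ) :
    ∃ c : ℝ, 0 < c ∧ ∀ n : ℕ, n ≠ 0 → (#n.divisors : ℝ) ≤ c * (n : ℝ) ^ θ := by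
  set K : ℝ := 1 + ((2 : ℝ) ^ θ - 1)⁻¹
  have hK : 1 ≤ K := le_add_of_nonneg_right
    (inv_nonneg.2 (sub_nonneg.2 (Real.one_le_rpow (by norm_num) hθ.le)))
  set M : ℕ := ⌈(2 : ℝ) ^ θ⁻¹⌉₊
  refine ⟨K ^ M, by positivity, fun n hn => ?_⟩
  have hsmall : #{p ∈ n.primeFactors | ((p : ℕ) : ℝ) ^ θ < 2} ≤ M := by
    refine (card_le_card fun p hp => ?_).trans (card_range M).le
    rw [mem_filter] at hp
    rw [mem_range, Nat.lt_ceil]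
    calc (p : ℝ) = ((p : ℝ) ^ θ) ^ θ⁻¹ := by
          rw [← Real.rpow_mul (Nat.cast_nonneg p), mul_inv_cancel₀ hθ.ne', Real.rpow_one]
      _ < 2 ^ θ⁻¹ := by gcongr; exact hp.2
  have hn_pow : (n : ℝ) ^ θ = ∏ p ∈ n.primeFactors, ((p : ℝ) ^ θ) ^ n.factorization p := by
    conv_lhs => rw [Nat.prod_primeFactors_pow_factorization hn]
    push_cast
    rw [← Real.finsetProd_rpow _ _ (fun p _ => by positivity)]
    exact prod_congr rfl fun p _ => (Real.rpow_pow_comm (Nat.cast_nonneg p) θ _).symm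
  calc (#n.divisors : ℝ) = ∏ p ∈ n.primeFactors, ((n.factorization p : ℝ) + 1) := by
        rw [Nat.card_divisors hn]; push_cast; rfl
    _ ≤ ∏ p ∈ n.primeFactors,
          (if (p : ℝ) ^ θ < 2 then K else 1) * ((p : ℝ) ^ θ) ^ n.factorization p :=
        prod_le_prod (fun _ _ => by positivity) fun p hp => add_one_le_ite_mul_rpow_pow hθ
          (by exact_mod_cast (Nat.prime_of_mem_primeFactors hp).two_le) _
    _ = K ^ #{p ∈ n.primeFactors | ((p : ℕ) : ℝ) ^ θ < 2} * (n : ℝ) ^ θ := by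
        rw [prod_mul_distrib, prod_ite, prod_const, prod_const_one, mul_one, hn_pow]
    _ ≤ K ^ M * (n : ℝ) ^ θ := by gcongr

section Convolution

variable {R : Type*} [NormedRing R] [CompleteSpace R] {f g : ℕ → R}

theorem hasSum_convolution_of_map_zero (hf : Summable fun n => ‖f n‖)
    (hg : Summable fun n => ‖g n‖) (hf0 : f 0 = 0) (hg0 : g 0 = 0) :
    HasSum (f ⍟ g) ((∑' n, f n) * ∑' n, g n) := by
  have hprod := (hf.of_norm.hasSum.mul hg.of_norm.hasSum
    (summable_mul_of_summable_norm hf hg)).tsum_fiberwise fun p => p.1 * p.2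
  suffices f ⍟ g = fun n => ∑' p : (fun p : ℕ × ℕ => p.1 * p.2) ⁻¹' {n}, f p.1.1 * g p.1.2 by
    rwa [this]
  funext n
  rcases eq_or_ne n 0 with rfl | hn
  · have hfib : ∀ p : (fun p : ℕ × ℕ => p.1 * p.2) ⁻¹' {0}, f p.1.1 * g p.1.2 = 0 := by
      rintro ⟨⟨k, m⟩, hp⟩
      rcases Nat.mul_eq_zero.1 hp with rfl | rfl <;> simp [hf0, hg0]
    simp [hfib]
  · rw [show (fun p : ℕ × ℕ => p.1 * p.2) ⁻¹' {n} = n.divisorsAntidiagonal by ext; simp [hn],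
      Finset.tsum_subtype' n.divisorsAntidiagonal fun p => f p.1 * g p.2,
      LSeries.convolution_def]

theorem hasSum_convolution_succ (hf : Summable fun n => ‖f (n + 1)‖)
    (hg : Summable fun n => ‖g (n + 1)‖) :
    HasSum (fun n => (f ⍟ g) (n + 1)) ((∑' n, f (n + 1)) * ∑' n, g (n + 1)) := by
  set f₀ : ℕ → R := fun n => if n = 0 then 0 else f n
  set g₀ : ℕ → R := fun n => if n = 0 then 0 else g n
  have hf₀ : Summable fun n => ‖f₀ n‖ := (summable_nat_add_iff 1).1 (by simpa [f₀] using hf)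
  have hg₀ : Summable fun n => ‖g₀ n‖ := (summable_nat_add_iff 1).1 (by simpa [g₀] using hg)
  have hfg : f ⍟ g = f₀ ⍟ g₀ :=
    LSeries.convolution_congr (fun hn => (if_neg hn).symm) fun hn => (if_neg hn).symm
  have key := hasSum_convolution_of_map_zero hf₀ hg₀ (if_pos rfl) (if_pos rfl)
  rw [hf₀.of_norm.tsum_eq_zero_add, hg₀.of_norm.tsum_eq_zero_add, ← hfg] at key
  simpa [f₀, g₀] using (hasSum_nat_add_iff' 1).2 key

end Convolution

noncomputable section

def weightedSq (u : ℕ → ℂ) (s : ℝ) (n : ℕ) : ℝ := ‖u n‖ ^ 2 * (n : ℝ) ^ s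

def tailWeightedSq (X : ℝ) (u : ℕ → ℂ) (s : ℝ) (n : ℕ) : ℝ :=
  if X < n then weightedSq u s n else 0

def truncatedConv (b a : ℕ → ℂ) (X : ℝ) (n : ℕ) : ℂ :=
  ∑ d ∈ n.divisors.filter fun d : ℕ => (d : ℝ) ≤ X, b d * a (n / d)

end

section Mollifier

lemma weightedSq_nonneg (u : ℕ → ℂ) (s : ℝ) (n : ℕ) : 0 ≤ weightedSq u s n := by
  unfold weightedSq; positivity

lemma tailWeightedSq_nonneg (X : ℝ) (u : ℕ → ℂ) (s : ℝ) (n : ℕ) : 0 ≤ tailWeightedSq X u s n := by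
  unfold tailWeightedSq; split_ifs
  exacts [weightedSq_nonneg u s n, le_rfl]

lemma tailWeightedSq_le_weightedSq (X : ℝ) (u : ℕ → ℂ) (s : ℝ) (n : ℕ) :
    tailWeightedSq X u s n ≤ weightedSq u s n := by
  unfold tailWeightedSq; split_ifs
  exacts [le_rfl, weightedSq_nonneg u s n]

variable {a b : ℕ → ℂ} {X : ℝ}

/-- Since the full convolution vanishes at `N`, the divisors `d ≤ X` can be traded for the
divisors `d > X`, on which only the tail of `b` enters; then Cauchy–Schwarz. -/
lemma norm_truncatedConv_sq_le {N : ℕ} (hN : ∑ d ∈ N.divisors, b d * a (N / d) = 0) :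
    ‖truncatedConv b a X N‖ ^ 2 ≤
      #N.divisors * ∑ d ∈ N.divisors, (if X < d then ‖b d‖ ^ 2 else 0) * ‖a (N / d)‖ ^ 2 := by
  set T := N.divisors.filter fun d : ℕ => ¬(d : ℝ) ≤ X
  have hflip : truncatedConv b a X N = -∑ d ∈ T, b d * a (N / d) := by
    rw [eq_neg_iff_add_eq_zero, truncatedConv, sum_filter_add_sum_filter_not, hN]
  calc ‖truncatedConv b a X N‖ ^ 2 ≤ (∑ d ∈ T, ‖b d‖ * ‖a (N / d)‖) ^ 2 := by
        rw [hflip, norm_neg]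
        gcongr
        exact (norm_sum_le _ _).trans_eq (sum_congr rfl fun d _ => norm_mul _ _)
    _ ≤ #T * ∑ d ∈ T, (‖b d‖ * ‖a (N / d)‖) ^ 2 := sq_sum_le_card_mul_sum_sq
    _ ≤ #N.divisors * ∑ d ∈ T, (‖b d‖ * ‖a (N / d)‖) ^ 2 := by
        gcongr
        exact filter_subset _ _
    _ = _ := by
        simp only [T, sum_filter, not_le, ite_mul, zero_mul, mul_pow]

lemma tailWeightedSq_truncatedConv_le {c t θ : ℝ} (hc : 0 ≤ c)
    (hdiv : ∀ n : ℕ, n ≠ 0 → (#n.divisors : ℝ) ≤ c * (n : ℝ) ^ θ)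
    (hconv : ∀ n : ℕ, 1 < n → ∑ d ∈ n.divisors, b d * a (n / d) = 0) (hX : 1 ≤ X) (N : ℕ) :
    tailWeightedSq X (truncatedConv b a X) t N ≤
      c * (tailWeightedSq X b (t + θ) ⍟ weightedSq a (t + θ)) N := by
  simp only [LSeries.convolution_def]
  rw [Nat.sum_divisorsAntidiagonal fun d m =>
    tailWeightedSq X b (t + θ) d * weightedSq a (t + θ) m]
  obtain hNX | hXN := le_or_gt (N : ℝ) X
  · rw [tailWeightedSq, if_neg hNX.not_gt]
    exact mul_nonneg hc (sum_nonneg fun d _ =>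
      mul_nonneg (tailWeightedSq_nonneg _ _ _ _) (weightedSq_nonneg _ _ _))
  rw [tailWeightedSq, if_pos hXN]
  have hN1 : 1 < N := by exact_mod_cast hX.trans_lt hXN
  have hN : (0 : ℝ) < N := by positivity
  set S := ∑ d ∈ N.divisors, (if X < d then ‖b d‖ ^ 2 else 0) * ‖a (N / d)‖ ^ 2
  have hS : 0 ≤ S := sum_nonneg fun d _ => mul_nonneg (by split_ifs <;> positivity) (by positivity)
  calc weightedSq (truncatedConv b a X) t N ≤ #N.divisors * S * (N : ℝ) ^ t := by
        unfold weightedSq; gcongr; exact norm_truncatedConv_sq_le (hconv N hN1)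
    _ ≤ c * (N : ℝ) ^ θ * S * (N : ℝ) ^ t := by gcongr; exact hdiv N (by omega)
    _ = c * ∑ d ∈ N.divisors, (if X < d then ‖b d‖ ^ 2 else 0) * ‖a (N / d)‖ ^ 2
          * (N : ℝ) ^ (t + θ) := by
        rw [Real.rpow_add hN, ← sum_mul]
        ring
    _ = c * ∑ d ∈ N.divisors, tailWeightedSq X b (t + θ) d * weightedSq a (t + θ) (N / d) := by
        refine congrArg (c * ·) (sum_congr rfl fun d hd => ?_)
        have hdN := Nat.dvd_of_mem_divisors hd
        rw [← Nat.mul_div_cancel' hdN, Nat.cast_mul,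
          Real.mul_rpow (Nat.cast_nonneg _) (Nat.cast_nonneg _), Nat.mul_div_cancel' hdN]
        unfold tailWeightedSq weightedSq
        split_ifs <;> ring

theorem tsum_tailWeightedSq_truncatedConv_le {c t θ : ℝ} (hc : 0 ≤ c)
    (hdiv : ∀ n : ℕ, n ≠ 0 → (#n.divisors : ℝ) ≤ c * (n : ℝ) ^ θ)
    (hconv : ∀ n : ℕ, 1 < n → ∑ d ∈ n.divisors, b d * a (n / d) = 0) (hX : 1 ≤ X)
    (ha : Summable fun n => weightedSq a (t + θ) (n + 1))
    (hb : Summable fun n => weightedSq b (t + θ) (n + 1)) :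
    ∑' n, tailWeightedSq X (truncatedConv b a X) t (n + 1) ≤
      c * (∑' n, weightedSq a (t + θ) (n + 1)) * ∑' n, tailWeightedSq X b (t + θ) (n + 1) := by
  have hb' : Summable fun n => tailWeightedSq X b (t + θ) (n + 1) :=
    hb.of_nonneg_of_le (fun _ => tailWeightedSq_nonneg _ _ _ _)
      fun _ => tailWeightedSq_le_weightedSq _ _ _ _
  have hconvSum := (hasSum_convolution_succ (by simpa using hb'.abs)
    (by simpa using ha.abs)).mul_left c
  have hle := fun n => tailWeightedSq_truncatedConv_le (t := t) hc hdiv hconv hX (n + 1)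
  calc ∑' n, tailWeightedSq X (truncatedConv b a X) t (n + 1)
      ≤ ∑' n, c * (tailWeightedSq X b (t + θ) ⍟ weightedSq a (t + θ)) (n + 1) :=
        (hconvSum.summable.of_nonneg_of_le (fun _ => tailWeightedSq_nonneg _ _ _ _)
          hle).tsum_le_tsum hle hconvSum.summable
    _ = _ := by rw [hconvSum.tsum_eq]; ring

theorem tendsto_tsum_tailWeightedSq_atTop {u : ℕ → ℂ} {s : ℝ}
    (hu : Summable fun n => weightedSq u s (n + 1)) :
    Tendsto (fun X => ∑' n, tailWeightedSq X u s (n + 1)) atTop (𝓝 0) := by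
  have hlim : ∀ n, Tendsto (fun X => tailWeightedSq X u s (n + 1)) atTop (𝓝 0) := fun n =>
    tendsto_const_nhds.congr' <| (eventually_ge_atTop ((n + 1 : ℕ) : ℝ)).mono fun X hX => by
      simp only [tailWeightedSq, if_neg hX.not_gt]
  have hdom : ∀ X n, ‖tailWeightedSq X u s (n + 1)‖ ≤ weightedSq u s (n + 1) := fun X n => by
    rw [Real.norm_of_nonneg (tailWeightedSq_nonneg _ _ _ _)]
    exact tailWeightedSq_le_weightedSq _ _ _ _
  simpa using tendsto_tsum_of_dominated_convergence hu hlim (Eventually.of_forall hdom)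

end Mollifier

/-- With dₙ = Σ_{d|n, d≤X} b_d a_{n/d}, if Σ|aₙ|² n^{-2(σ-ε)} = C < ∞,
Σ_{n>X}|bₙ|² n^{-2σ+2ε} = R(X) < ∞ and Σ_{d|n} b_d a_{n/d} = 0 for all n > 1, then
Σ_{n>X} |dₙ|² n^{-2σ} ≤ c(ε)·C·R(X) with c(ε) depending only on ε; in particular
Σ_{n>X} |dₙ|² n^{-2σ} → 0 as X → ∞. -/
theorem mollifier_tail_bound (a b : ℕ → ℂ) (σ ε : ℝ) (hε : 0 < ε)
    (hC : Summable fun n : ℕ => ‖a (n + 1)‖ ^ 2 * ((n + 1 : ℕ) : ℝ) ^ (-2 * (σ - ε)))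
    (hR : Summable fun n : ℕ => ‖b (n + 1)‖ ^ 2 * ((n + 1 : ℕ) : ℝ) ^ (-2 * σ + 2 * ε))
    (hconv : ∀ n : ℕ, 1 < n → ∑ d ∈ n.divisors, b d * a (n / d) = 0) :
    (∃ c : ℝ, 0 < c ∧ ∀ X : ℝ, 1 ≤ X →
        (∑' n : ℕ, if X < ((n + 1 : ℕ) : ℝ) then
            ‖∑ d ∈ (n + 1).divisors.filter fun d : ℕ => (d : ℝ) ≤ X,
                b d * a ((n + 1) / d)‖ ^ 2 * ((n + 1 : ℕ) : ℝ) ^ (-2 * σ) else 0) ≤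
          c * (∑' n : ℕ, ‖a (n + 1)‖ ^ 2 * ((n + 1 : ℕ) : ℝ) ^ (-2 * (σ - ε))) *
            (∑' n : ℕ, if X < ((n + 1 : ℕ) : ℝ) then
              ‖b (n + 1)‖ ^ 2 * ((n + 1 : ℕ) : ℝ) ^ (-2 * σ + 2 * ε) else 0)) ∧
      Tendsto
        (fun X : ℝ =>
          ∑' n : ℕ, if X < ((n + 1 : ℕ) : ℝ) then
            ‖∑ d ∈ (n + 1).divisors.filter fun d : ℕ => (d : ℝ) ≤ X,
                b d * a ((n + 1) / d)‖ ^ 2 * ((n + 1 : ℕ) : ℝ) ^ (-2 * σ) else 0)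
        atTop (nhds 0) := by
  obtain ⟨c, hc, hdiv⟩ := exists_card_divisors_le_mul_rpow (mul_pos two_pos hε)
  rw [show -2 * (σ - ε) = -2 * σ + 2 * ε by ring] at hC ⊢
  have hbound : ∀ X : ℝ, 1 ≤ X → ∑' n, tailWeightedSq X (truncatedConv b a X) (-2 * σ) (n + 1) ≤
      c * (∑' n, weightedSq a (-2 * σ + 2 * ε) (n + 1)) *
        ∑' n, tailWeightedSq X b (-2 * σ + 2 * ε) (n + 1) := fun X hX =>
    tsum_tailWeightedSq_truncatedConv_le (t := -2 * σ) (θ := 2 * ε) hc.le hdiv hconv hX hC hR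
  refine ⟨⟨c, hc, hbound⟩, ?_⟩
  have hupper := (tendsto_tsum_tailWeightedSq_atTop hR).const_mul
    (c * ∑' n, weightedSq a (-2 * σ + 2 * ε) (n + 1))
  rw [mul_zero] at hupper
  have hlim : Tendsto (fun X => ∑' n, tailWeightedSq X (truncatedConv b a X) (-2 * σ) (n + 1))
      atTop (𝓝 0) :=
    tendsto_of_tendsto_of_tendsto_of_le_of_le' tendsto_const_nhds hupper
      (Eventually.of_forall fun X => tsum_nonneg fun n => tailWeightedSq_nonneg _ _ _ _)
      ((eventually_ge_atTop 1).mono hbound)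
  exact hlim
end
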